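/- Let (U, W, B) be a linear system over ℂ. The linear map ι : U ⊗ W → End_ℂ(U), ι(u ⊗ w)(x) = B(x,w) • u, is injective; its range equals the set S := {φ ∈ End_ℂ(U) : φ has finite rank and φ*(W̃) ⊆ W̃}; and S is a Lie ideal of the Mackey Lie algebra gl^M_{U,W} (i.e. for φ ∈ gl^M_{U,W} and ψ ∈ S one has φψ − ψφ ∈ S). In particular, the Lie algebra gl_{U,W} = range ι is isomorphic to the ideal S of gl^M_{U,W}. -/

import Mathlib

open TensorProduct

attribute [local instance] LieRing.ofAssociativeRing

variable {U W : Type*} [AddCommGroup U] [Module ℂ U] [AddCommGroup W] [Module ℂ W]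

/-- The linear map `ι : U ⊗ W → End ℂ U` determined by `ι(u ⊗ w)(x) = B x w • u`. -/
noncomputable def iotaMap (B : U →ₗ[ℂ] W →ₗ[ℂ] ℂ) :
    U ⊗[ℂ] W →ₗ[ℂ] Module.End ℂ U :=
  (dualTensorHom ℂ U U).comp ((TensorProduct.map B.flip LinearMap.id).comp
    (TensorProduct.comm ℂ U W).toLinearMap)

/-- The defining property of `iotaMap`. -/
theorem iotaMap_apply (B : U →ₗ[ℂ] W →ₗ[ℂ] ℂ) (u x : U) (w : W) :
    iotaMap B (u ⊗ₜ w) x = B x w • u := by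
  simp [iotaMap]

/-- The linear map `T : U ⊗ W → ℂ` determined by `T(u ⊗ w) = B u w`. -/
noncomputable def Tmap (B : U →ₗ[ℂ] W →ₗ[ℂ] ℂ) : U ⊗[ℂ] W →ₗ[ℂ] ℂ :=
  TensorProduct.lift B

theorem Tmap_apply (B : U →ₗ[ℂ] W →ₗ[ℂ] ℂ) (u : U) (w : W) :
    Tmap B (u ⊗ₜ w) = B u w := rfl

/-- The Mackey Lie algebra `gl^M_{U,W}`: all `φ ∈ End ℂ U` whose dual map preserves
`W̃ = range (B.flip) ⊆ U*`. -/
noncomputable def glMackey (B : U →ₗ[ℂ] W →ₗ[ℂ] ℂ) :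
    LieSubalgebra ℂ (Module.End ℂ U) where
  carrier := {φ | ∀ ξ ∈ LinearMap.range B.flip, φ.dualMap ξ ∈ LinearMap.range B.flip}
  add_mem' := by
    intro a b ha hb ξ hξ
    have h : (a + b).dualMap ξ = a.dualMap ξ + b.dualMap ξ := by ext x; simp
    rw [h]
    exact Submodule.add_mem _ (ha ξ hξ) (hb ξ hξ)
  zero_mem' := by
    intro ξ hξ
    have h : (0 : Module.End ℂ U).dualMap ξ = 0 := by ext x; simp
    rw [h]; exact Submodule.zero_mem _
  smul_mem' := by
    intro c a ha ξ hξ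
    have h : (c • a).dualMap ξ = c • a.dualMap ξ := by ext x; simp
    rw [h]
    exact Submodule.smul_mem _ _ (ha ξ hξ)
  lie_mem' := by
    intro a b ha hb ξ hξ
    have h : (⁅a, b⁆ : Module.End ℂ U).dualMap ξ
        = b.dualMap (a.dualMap ξ) - a.dualMap (b.dualMap ξ) := by
      ext x; simp [Module.End.lie_apply]
    rw [h]
    exact Submodule.sub_mem _ (hb _ (ha ξ hξ)) (ha _ (hb ξ hξ))

/-- The set `S` of finite-rank endomorphisms of `U` whose dual map preserves
`W̃ = range B.flip`. -/
def Sset (B : U →ₗ[ℂ] W →ₗ[ℂ] ℂ) : Set (Module.End ℂ U) :=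
  {φ | FiniteDimensional ℂ (LinearMap.range φ) ∧
    ∀ ξ ∈ LinearMap.range B.flip, φ.dualMap ξ ∈ LinearMap.range B.flip}

/-! Every tensor in `Dual U ⊗ U` lies in `Dual U ⊗ U'` for a finite-dimensional `U' ⊆ U`, and
`Dual U ⊗ U' ≅ Hom(U, U')`; hence `Dual U ⊗ U → End U` is injective, and so is `ι`, its composite
with the injection `U ⊗ W → Dual U ⊗ U` induced by `w ↦ B(·, w)`. Conversely, if `φ` has finite
rank and `φ*(W̃) ⊆ W̃`, the coordinate functionals of a basis `vᵢ` of `range φ` are restrictions of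
functionals `B(·, wᵢ')`, because `B` separates the points of the finite-dimensional `range φ`;
writing `φ*(B(·, wᵢ')) = B(·, wᵢ)` gives `φ = ι(∑ vᵢ ⊗ wᵢ)`. -/

theorem dualTensorHom_injective {K M N : Type*} [Field K] [AddCommGroup M] [Module K M]
    [AddCommGroup N] [Module K N] : Function.Injective (dualTensorHom K M N) := by
  refine (injective_iff_map_eq_zero _).mpr fun t ht => ?_
  obtain ⟨N', _, ht'⟩ := TensorProduct.exists_finite_submodule_right_of_setFinite {t}
    (Set.finite_singleton t)
  obtain ⟨t', rfl⟩ := ht' rfl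
  have hcomp := LinearMap.congr_fun (dualTensorHom_comp_lTensor (M := M) N'.subtype) t'
  have ht'_zero : dualTensorHom K M N' t' = 0 := by
    ext m
    simpa using LinearMap.congr_fun (hcomp.symm.trans ht) m
  rw [dualTensorHom_bijective_of_finite_projective_right.injective
    (ht'_zero.trans (map_zero _).symm), map_zero]

namespace LinearMap

variable {K M N : Type*}

theorem hasFiniteRange_smulRight [CommRing K] [IsNoetherianRing K] [AddCommGroup M] [Module K M]
    [AddCommGroup N] [Module K N] (f : M →ₗ[K] K) (x : N) : (f.smulRight x).HasFiniteRange :=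
  (HasFiniteRange.of_finite_dom (f := toSpanSingleton K N x)).comp_right f

theorem dualMap_smulRight [CommSemiring K] [AddCommMonoid M] [Module K M] [AddCommMonoid N]
    [Module K N] (f : M →ₗ[K] K) (x : N) (ξ : Module.Dual K N) :
    (f.smulRight x).dualMap ξ = ξ x • f := by
  ext m
  simp [mul_comm]

theorem SeparatingLeft.surjective_flip_domRestrict [Field K] [AddCommGroup M] [Module K M]
    [AddCommGroup N] [Module K N] {B : M →ₗ[K] N →ₗ[K] K} (hB : B.SeparatingLeft)
    (V : Submodule K M) [FiniteDimensional K V] : Function.Surjective (B.domRestrict V).flip :=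
  flip_surjective_iff₁.mpr <|
    (ker_eq_bot.mp (separatingLeft_iff_ker_eq_bot.mp hB)).comp Subtype.val_injective

end LinearMap

section LinearSystem

variable (B : U →ₗ[ℂ] W →ₗ[ℂ] ℂ)

theorem iotaMap_tmul (u : U) (w : W) : iotaMap B (u ⊗ₜ w) = (B.flip w).smulRight u :=
  LinearMap.ext fun x => iotaMap_apply B u x w

theorem iotaMap_injective (hB : B.SeparatingRight) : Function.Injective (iotaMap B) := by
  have hflip : Function.Injective B.flip :=
    LinearMap.ker_eq_bot.mp (LinearMap.separatingRight_iff_flip_ker_eq_bot.mp hB)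
  exact dualTensorHom_injective.comp <|
    (Module.Flat.rTensor_preserves_injective_linearMap _ hflip).comp
      (TensorProduct.comm ℂ U W).injective

theorem mem_Sset_iff {φ : Module.End ℂ U} :
    φ ∈ Sset B ↔ φ.HasFiniteRange ∧ φ ∈ glMackey B :=
  and_congr_left' Module.Finite.iff_fg

theorem iotaMap_mem_Sset (t : U ⊗[ℂ] W) : iotaMap B t ∈ Sset B := by
  rw [mem_Sset_iff]
  induction t using TensorProduct.induction_on with
  | zero => exact ⟨by simp, by simp⟩
  | tmul u w =>
    rw [iotaMap_tmul]
    refine ⟨LinearMap.hasFiniteRange_smulRight _ _, fun ξ _ => ?_⟩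
    rw [LinearMap.dualMap_smulRight]
    exact Submodule.smul_mem _ _ ⟨w, rfl⟩
  | add s t hs ht =>
    rw [map_add]
    exact ⟨hs.1.add ht.1, add_mem hs.2 ht.2⟩

theorem commutator_mem_Sset {φ ψ : Module.End ℂ U} (hφ : φ ∈ glMackey B) (hψ : ψ ∈ Sset B) :
    φ * ψ - ψ * φ ∈ Sset B := by
  rw [mem_Sset_iff] at hψ ⊢
  exact ⟨(hψ.1.comp_left φ).sub (hψ.1.comp_right φ), (glMackey B).lie_mem hφ hψ.2⟩

theorem exists_flip_eq_comp_rangeRestrict (hB : B.SeparatingLeft) {φ : Module.End ℂ U}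
    (hφ : φ ∈ glMackey B) [FiniteDimensional ℂ (LinearMap.range φ)]
    (f : Module.Dual ℂ (LinearMap.range φ)) : ∃ w, B.flip w = f ∘ₗ φ.rangeRestrict := by
  obtain ⟨w', hw'⟩ := hB.surjective_flip_domRestrict (LinearMap.range φ) f
  obtain ⟨w, hw⟩ := hφ (B.flip w') ⟨w', rfl⟩
  refine ⟨w, LinearMap.ext fun x => ?_⟩
  rw [hw, ← hw']
  rfl

theorem mem_range_iotaMap_of_mem_Sset (hB : B.SeparatingLeft) {φ : Module.End ℂ U}
    (hφ : φ ∈ Sset B) : φ ∈ LinearMap.range (iotaMap B) := by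
  obtain ⟨_, hφ⟩ := hφ
  let v := Module.finBasis ℂ (LinearMap.range φ)
  choose w hw using fun i => exists_flip_eq_comp_rangeRestrict B hB hφ (v.coord i)
  refine ⟨∑ i, (v i : U) ⊗ₜ w i, LinearMap.ext fun x => ?_⟩
  have hx : ∀ i, B x (w i) = v.repr (φ.rangeRestrict x) i := fun i =>
    LinearMap.congr_fun (hw i) x
  simp only [map_sum, LinearMap.sum_apply, iotaMap_apply, hx]
  have hsum := congrArg Subtype.val (v.sum_repr (φ.rangeRestrict x))
  push_cast at hsum
  exact hsum

end LinearSystem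

/-- For a linear system `(U, W, B)`: `ι` is injective, its range is exactly the set `S`
of finite-rank endomorphisms `φ` with `φ*(W̃) ⊆ W̃`, and `S` is a Lie ideal of the
Mackey Lie algebra `gl^M_{U,W}`.  In particular `gl_{U,W} = range ι ≅ S`. -/
theorem stmt_7 (B : U →ₗ[ℂ] W →ₗ[ℂ] ℂ)
    (hB1 : ∀ u : U, (∀ w : W, B u w = 0) → u = 0)
    (hB2 : ∀ w : W, (∀ u : U, B u w = 0) → w = 0) :
    Function.Injective (iotaMap B) ∧
    (∀ φ : Module.End ℂ U, φ ∈ LinearMap.range (iotaMap B) ↔ φ ∈ Sset B) ∧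
    (∀ φ ∈ glMackey B, ∀ ψ ∈ Sset B, φ * ψ - ψ * φ ∈ Sset B) :=
  ⟨iotaMap_injective B hB2,
    fun _ => ⟨by rintro ⟨t, rfl⟩; exact iotaMap_mem_Sset B t, mem_range_iotaMap_of_mem_Sset B hB1⟩,
    fun _ hφ _ hψ => commutator_mem_Sset B hφ hψ⟩
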